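/- Let x : ℝ → ℝ be a bounded C² function satisfying −x'' + 2r x ≥ 0 everywhere, with r > 0. If x ≥ ξ > 0 on a set S ⊂ ℝ and x is bounded below by 0 everywhere, then for every t, x(t) ≥ ξ · e^{−√(2r) dist(t, S)} provided S is nonempty and closed. -/

import Mathlib

open Real Filter Set Metric Topology

/-- Maximum principle on a half-line: a bounded-below `C²` supersolution of `-d²/dt²+2r`
on `[a,∞)` that is nonnegative at `a` is nonnegative on `[a,∞)`. -/
lemma halfline_nonneg (r a M : ℝ) (hr : 0 < r) (w w' w'' : ℝ → ℝ)
    (hw : ∀ t, HasDerivAt w (w' t) t) (hw' : ∀ t, HasDerivAt w' (w'' t) t)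
    (hbdd : ∀ t, a ≤ t → -M ≤ w t)
    (hL : ∀ t, a ≤ t → 0 ≤ -w'' t + 2 * r * w t)
    (ha : 0 ≤ w a) : ∀ t, a ≤ t → 0 ≤ w t := by
  intro t₁ ht₁
  by_contra hneg
  push_neg at hneg
  have h2r : (0:ℝ) < 2 * r := by linarith
  set c : ℝ := Real.sqrt (2 * r) with hcdef
  have hc : 0 < c := Real.sqrt_pos.mpr h2r
  have hc2 : c * c = 2 * r := Real.mul_self_sqrt h2r.le
  set E : ℝ → ℝ := fun u => Real.exp (c * (u - a)) with hEdef
  have hEpos : ∀ u, 0 < E u := fun u => Real.exp_pos _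
  set ε : ℝ := (-w t₁) / (2 * E t₁) with hεdef
  have hε : 0 < ε := div_pos (by linarith) (by positivity)
  set g : ℝ → ℝ := fun u => w u + ε * E u with hgdef
  have hEderiv : ∀ u, HasDerivAt E (c * E u) u := by
    intro u
    have h1 : HasDerivAt (fun u : ℝ => c * (u - a)) (c * 1) u :=
      ((hasDerivAt_id u).sub_const a).const_mul c
    have := h1.exp
    simpa [hEdef, mul_comm] using this
  have hg : ∀ u, HasDerivAt g (w' u + ε * (c * E u)) u :=
    fun u => (hw u).add ((hEderiv u).const_mul ε)
  have hg' : ∀ u, HasDerivAt (fun u => w' u + ε * (c * E u)) (w'' u + ε * (c * (c * E u))) u :=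
    fun u => (hw' u).add (((hEderiv u).const_mul c).const_mul ε)
  have hgcont : Continuous g := by
    refine continuous_iff_continuousAt.mpr fun u => (hg u).continuousAt
  have hgt₁ : g t₁ < 0 := by
    have : ε * E t₁ = -w t₁ / 2 := by
      rw [hεdef, div_mul_eq_mul_div, div_eq_div_iff (ne_of_gt (by linarith [hEpos t₁])) (by norm_num)]
      ring
    simp only [hgdef]
    rw [this]
    linarith
  have hga : 0 < g a := by
    have : E a = 1 := by simp [hEdef]
    simp only [hgdef, this]
    linarith
  -- find T ≥ t₁ with ε * E T ≥ M
  have htend : Tendsto (fun u => ε * E u) atTop atTop := by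
    have h1 : Tendsto (fun u : ℝ => c * (u - a)) atTop atTop :=
      (tendsto_atTop_add_const_right _ (-a) tendsto_id).const_mul_atTop hc
    have h2 : Tendsto E atTop atTop := Real.tendsto_exp_atTop.comp h1
    exact h2.const_mul_atTop hε
  obtain ⟨T, hTM, hTt₁⟩ : ∃ T, M ≤ ε * E T ∧ t₁ ≤ T := by
    have := (htend.eventually_ge_atTop M).and (eventually_ge_atTop t₁)
    obtain ⟨T, h1, h2⟩ := this.exists
    exact ⟨T, h1, h2⟩
  have haT : a ≤ T := le_trans ht₁ hTt₁
  -- minimum of g on [a, T]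
  obtain ⟨ts, htsmem, htsmin⟩ :=
    isCompact_Icc.exists_isMinOn (Set.nonempty_Icc.mpr haT) hgcont.continuousOn
  have hts_le : g ts ≤ g t₁ := htsmin ⟨ht₁, hTt₁⟩
  have htsneg : g ts < 0 := lt_of_le_of_lt hts_le hgt₁
  have htsa : a < ts := by
    rcases lt_or_eq_of_le htsmem.1 with h | h
    · exact h
    · exfalso; rw [← h] at htsneg; linarith
  have htsT : ts < T := by
    rcases lt_or_eq_of_le htsmem.2 with h | h
    · exact h
    · exfalso
      have : (0:ℝ) ≤ g T := by
        have := hbdd T haT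
        simp only [hgdef]; linarith
      rw [h] at htsneg; linarith
  have hlocal : IsLocalMin g ts := htsmin.isLocalMin (Icc_mem_nhds htsa htsT)
  have hd0 : w' ts + ε * (c * E ts) = 0 := hlocal.hasDerivAt_eq_zero (hg ts)
  -- second derivative at ts is negative
  have hLts := hL ts (le_of_lt htsa)
  have hg''neg : w'' ts + ε * (c * (c * E ts)) < 0 := by
    have h1 : ε * (c * (c * E ts)) = 2 * r * (ε * E ts) := by
      rw [← hc2]; ring
    have h2 : w'' ts ≤ 2 * r * w ts := by linarith
    have h3 : w ts + ε * E ts < 0 := htsneg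
    calc w'' ts + ε * (c * (c * E ts)) ≤ 2 * r * w ts + 2 * r * (ε * E ts) := by
          rw [h1]; linarith
      _ = 2 * r * (w ts + ε * E ts) := by ring
      _ < 0 := mul_neg_of_pos_of_neg h2r h3
  -- derive contradiction: g' has negative derivative at ts and g' ts = 0,
  -- so g' < 0 just to the right, so g decreases, contradicting local min
  set G' : ℝ → ℝ := fun u => w' u + ε * (c * E u) with hG'def
  have hslope : ∀ᶠ u in 𝓝[>] ts, G' u < 0 := by
    have hD := hasDerivAt_iff_tendsto_slope.mp (hg' ts)
    have hevent : ∀ᶠ u in 𝓝[≠] ts, slope G' ts u < 0 := by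
      apply hD.eventually (tendsto_id.eventually_lt_const hg''neg)
    have hsub : 𝓝[>] ts ≤ 𝓝[≠] ts := nhdsWithin_mono _ fun u hu => ne_of_gt hu
    filter_upwards [hsub hevent, self_mem_nhdsWithin] with u hu hmem
    have hupos : 0 < u - ts := sub_pos.mpr hmem
    have : slope G' ts u = G' u / (u - ts) := by
      simp [slope_def_field, hG'def, hd0]
    rw [this] at hu
    have := div_neg_iff.mp hu
    rcases this with ⟨h1, h2⟩ | ⟨h1, h2⟩
    · linarith
    · exact h1
  obtain ⟨δ, hδ, hball⟩ := Metric.eventually_nhds_iff.mp hlocal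
  obtain ⟨δ', hδ', hball'⟩ : ∃ δ' > 0, ∀ u, ts < u → u < ts + δ' → G' u < 0 := by
    have h := eventually_nhdsWithin_iff.mp hslope
    obtain ⟨δ', hδ', hb⟩ := Metric.eventually_nhds_iff.mp h
    refine ⟨δ', hδ', fun u h1 h2 => hb ?_ h1⟩
    rw [Real.dist_eq, abs_of_pos (by linarith)]
    linarith
  set u₀ : ℝ := ts + min δ δ' / 2 with hu₀
  have hmin2 : 0 < min δ δ' / 2 := by positivity
  have hu₀gt : ts < u₀ := by rw [hu₀]; linarith [hmin2]
  obtain ⟨ζ, hζmem, hζ⟩ := exists_hasDerivAt_eq_slope g G' hu₀gt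
    hgcont.continuousOn (fun u _ => hg u)
  have hζneg : G' ζ < 0 := by
    apply hball' ζ hζmem.1
    have h1 : u₀ ≤ ts + δ' := by
      simp only [hu₀]
      linarith [min_le_right δ δ', hδ', hδ]
    linarith [hζmem.2]
  have hgu₀ : g u₀ < g ts := by
    have hpos : 0 < u₀ - ts := by linarith
    have hsl : (g u₀ - g ts) / (u₀ - ts) < 0 := hζ ▸ hζneg
    rcases div_neg_iff.mp hsl with ⟨h1, h2⟩ | ⟨h1, h2⟩
    · linarith
    · linarith
  have : g ts ≤ g u₀ := by
    apply hball
    simp only [Real.dist_eq, hu₀]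
    rw [abs_of_pos (by linarith)]
    linarith [min_le_left δ δ', hδ, hδ']
  linarith

/-- Comparison with the exponential barrier to the right of a point `s` where `x ≥ ξ`. -/
lemma half_bound (r ξ : ℝ) (hr : 0 < r) (hξ : 0 < ξ)
    (x x' x'' : ℝ → ℝ)
    (hx : ∀ t, HasDerivAt x (x' t) t)
    (hx' : ∀ t, HasDerivAt x' (x'' t) t)
    (hsuper : ∀ t, 0 ≤ -x'' t + 2 * r * x t)
    (hx0 : ∀ t, 0 ≤ x t)
    (s : ℝ) (hxs : ξ ≤ x s) :
    ∀ t, s ≤ t → ξ * Real.exp (-Real.sqrt (2 * r) * (t - s)) ≤ x t := by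
  have h2r : (0:ℝ) < 2 * r := by linarith
  set c : ℝ := Real.sqrt (2 * r) with hcdef
  have hc : 0 < c := Real.sqrt_pos.mpr h2r
  have hc2 : c * c = 2 * r := Real.mul_self_sqrt h2r.le
  set ψ : ℝ → ℝ := fun u => ξ * Real.exp (-c * (u - s)) with hψdef
  have hψderiv : ∀ u, HasDerivAt ψ (-(c * ψ u)) u := by
    intro u
    have h1 : HasDerivAt (fun u : ℝ => -c * (u - s)) (-c * 1) u :=
      ((hasDerivAt_id u).sub_const s).const_mul (-c)
    have := (h1.exp).const_mul ξ
    refine this.congr_deriv ?_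
    simp [hψdef]; ring
  have hψderiv2 : ∀ u, HasDerivAt (fun u => -(c * ψ u)) (c * (c * ψ u)) u := by
    intro u
    have := ((hψderiv u).const_mul c).neg
    refine this.congr_deriv ?_
    ring
  set w : ℝ → ℝ := fun u => x u - ψ u with hwdef
  have hw : ∀ u, HasDerivAt w (x' u - -(c * ψ u)) u := fun u => (hx u).sub (hψderiv u)
  have hw' : ∀ u, HasDerivAt (fun u => x' u - -(c * ψ u)) (x'' u - c * (c * ψ u)) u :=
    fun u => (hx' u).sub (hψderiv2 u)
  have hψpos : ∀ u, 0 < ψ u := fun u => mul_pos hξ (Real.exp_pos _)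
  have hψle : ∀ u, s ≤ u → ψ u ≤ ξ := by
    intro u hu
    have : Real.exp (-c * (u - s)) ≤ 1 := by
      rw [Real.exp_le_one_iff]
      nlinarith
    calc ψ u = ξ * Real.exp (-c * (u - s)) := rfl
      _ ≤ ξ * 1 := by nlinarith
      _ = ξ := mul_one ξ
  have key := halfline_nonneg r s ξ hr w _ _ hw hw'
    (fun u hu => by
      have := hx0 u; have := hψle u hu; simp only [hwdef]; linarith)
    (fun u hu => by
      have h1 := hsuper u
      have : -(x'' u - c * (c * ψ u)) + 2 * r * w u = -x'' u + 2 * r * x u := by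
        simp only [hwdef]
        rw [← hc2]; ring
      linarith [this ▸ h1, h1, this.symm ▸ h1])
    (by
      have : ψ s = ξ := by simp [hψdef]
      simp only [hwdef, this]; linarith)
  intro t ht
  have := key t ht
  simp only [hwdef, hψdef] at this
  linarith



/-- A bounded, nonnegative `C²` supersolution of `-d²/dt² + 2r` on `ℝ` (with `r > 0`)
that is `≥ ξ > 0` on a nonempty closed set `S` dominates the exponential barrier
`ξ e^{-√(2r) dist(·,S)}` everywhere. -/
theorem supersolution_exponential_lower_bound (r ξ : ℝ) (hr : 0 < r) (hξ : 0 < ξ)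
    (x x' x'' : ℝ → ℝ)
    (hx : ∀ t, HasDerivAt x (x' t) t)
    (hx' : ∀ t, HasDerivAt x' (x'' t) t)
    (hbdd : ∃ M, ∀ t, |x t| ≤ M)
    (hsuper : ∀ t, 0 ≤ -x'' t + 2 * r * x t)
    (S : Set ℝ) (hSne : S.Nonempty) (hScl : IsClosed S)
    (hxS : ∀ t ∈ S, ξ ≤ x t)
    (hx0 : ∀ t, 0 ≤ x t) :
    ∀ t, ξ * Real.exp (-Real.sqrt (2 * r) * Metric.infDist t S) ≤ x t := by
  intro t
  obtain ⟨s, hsS, hds⟩ := hScl.exists_infDist_eq_dist hSne t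
  rw [hds, Real.dist_eq]
  rcases le_total s t with hst | hst
  · rw [abs_of_nonneg (by linarith)]
    exact half_bound r ξ hr hξ x x' x'' hx hx' hsuper hx0 s (hxS s hsS) t hst
  · rw [abs_of_nonpos (by linarith)]
    -- reflect
    set y : ℝ → ℝ := fun u => x (-u) with hydef
    set y' : ℝ → ℝ := fun u => -x' (-u) with hy'def
    set y'' : ℝ → ℝ := fun u => x'' (-u) with hy''def
    have hy : ∀ u, HasDerivAt y (y' u) u := by
      intro u
      have := (hx (-u)).comp u (hasDerivAt_neg u)
      simpa [hydef, hy'def, mul_comm, Function.comp_def] using this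
    have hy' : ∀ u, HasDerivAt y' (y'' u) u := by
      intro u
      have h1 := (hx' (-u)).comp u (hasDerivAt_neg u)
      have := h1.neg
      simpa [hy'def, hy''def, mul_comm, Function.comp_def, Pi.neg_def] using this
    have hysuper : ∀ u, 0 ≤ -y'' u + 2 * r * y u := fun u => hsuper (-u)
    have hy0 : ∀ u, 0 ≤ y u := fun u => hx0 (-u)
    have hys : ξ ≤ y (-s) := by simpa [hydef] using hxS s hsS
    have := half_bound r ξ hr hξ y y' y'' hy hy' hysuper hy0 (-s) hys (-t) (by linarith)
    simp only [hydef, neg_neg] at this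
    convert this using 3
    ring
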